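/- arXiv:1601.01361 — 2 statements merged into one kernel-verified Lean document; each statement's English description precedes it below -/
import Mathlib

section
/- Two A-lattices (L, ‖·‖), (L', ‖·‖') over A = k[t] are isometric (there exists an A-module isomorphism preserving the norm) if and only if they have the same vector of successive minima. -/
/-! A greedy tuple `y`, in which each `y j` has least norm among the vectors independent of
`y 0, …, y (j-1)`, exists because the sublevel sets of `N` lie in finite-dimensional `k`-spaces
and vectors of pairwise distinct norms are `k`-linearly independent, so `N` is well founded.
A greedy tuple realizes the successive minima, `N (y i) = r i`, and it is orthogonal:
`N (∑ aᵢ • yᵢ) = max (deg aᵢ + N yᵢ)`. Indeed, if the sum were shorter, the leading terms of the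
maximal summands, divided by a power of `t`, would give a vector independent of
`y 0, …, y (j-1)` and shorter than `y j`. The same argument applied to a remainder under Euclidean
division shows that `y` spans the lattice, since the rank is `n`. So two lattices with equal
minima have greedy bases with equal norms, and `yᵢ ↦ y'ᵢ` is an isometry. Conversely an isometry
preserves the sets whose least elements are the minima. -/

noncomputable def degA {k : Type*} [Field k] (a : Polynomial k) : WithBot ℝ :=
  WithBot.map (fun n : ℕ => (n : ℝ)) a.degree

open Polynomial Function Submodule

lemma Finset.exists_mem_eq_sup_of_bot_lt {ι α : Type*} [LinearOrder α] [OrderBot α]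
    {s : Finset ι} {f : ι → α} (h : ⊥ < s.sup f) : ∃ i ∈ s, s.sup f = f i := by
  obtain ⟨i, hi, -⟩ := Finset.lt_sup_iff.1 h
  exact s.exists_mem_eq_sup ⟨i, hi⟩ f

lemma Fin.take_snoc_of_le {β : Type*} {n m : ℕ} (h : m ≤ n) (h' : m ≤ n + 1) (y : Fin n → β)
    (z : β) : Fin.take m h' (Fin.snoc y z : Fin (n + 1) → β) = Fin.take m h y := by
  rw [← Fin.take_init, Fin.init_snoc]

section LinearAlgebra

variable {R M : Type*} [CommRing R] [AddCommGroup M] [Module R M]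

lemma LinearIndependent.smul_of_ne_zero [NoZeroDivisors R] {ι : Type*} {v : ι → M}
    (hv : LinearIndependent R v) {a : ι → R} (ha : ∀ i, a i ≠ 0) :
    LinearIndependent R fun i => a i • v i := by
  rw [linearIndependent_iff'] at hv ⊢
  intro s g hg i hi
  simp only [smul_smul] at hg
  exact (mul_eq_zero.1 (hv s _ hg i hi)).resolve_right (ha i)

lemma exists_smul_mem_span_of_not_linearIndependent_snoc {m : ℕ} {y : Fin m → M}
    (hy : LinearIndependent R y) {x : M} (h : ¬ LinearIndependent R (Fin.snoc y x)) :
    ∃ a : R, a ≠ 0 ∧ a • x ∈ span R (Set.range y) := by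
  by_contra! ha
  exact h (hy.finSnoc' y x fun c z hz hcz => by
    by_contra hc
    exact ha c hc (by rw [eq_neg_of_add_eq_zero_left hcz]; exact neg_mem hz))

lemma exists_linearIndependent_snoc [IsDomain R] {m q : ℕ} {y : Fin m → M}
    (hy : LinearIndependent R y) {x : Fin q → M} (hx : LinearIndependent R x) (hmq : m < q) :
    ∃ j, LinearIndependent R (Fin.snoc y (x j)) := by
  classical
  by_contra! h
  choose a ha hax using fun j => exists_smul_mem_span_of_not_linearIndependent_snoc hy (h j)
  have hcard := (linearIndependent_le_span_aux' _ (hx.smul_of_ne_zero ha) (Set.range y)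
    (Set.range_subset_iff.2 hax)).trans (Fintype.card_range_le y)
  simp only [Fintype.card_fin] at hcard
  omega

lemma LinearIndependent.eq_zero_of_sum_mem_span_image {ι : Type*} [Fintype ι] {v : ι → M}
    (hv : LinearIndependent R v) {d : ι → R} {s : Set ι}
    (h : ∑ i, d i • v i ∈ span R (v '' s)) {j : ι} (hj : j ∉ s) : d j = 0 := by
  obtain ⟨l, hl, hlv⟩ := (Finsupp.mem_span_image_iff_linearCombination R).1 h
  rw [Finsupp.linearCombination_apply, Finsupp.sum_fintype _ _ fun i => zero_smul R (v i)] at hlv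
  have hdl := Fintype.linearIndependent_iff.1 hv (fun i => d i - l i)
    (by simp only [sub_smul, Finset.sum_sub_distrib, hlv, sub_self]) j
  rwa [(Finsupp.mem_supported' R l).1 hl j hj, sub_zero] at hdl

lemma LinearIndependent.snoc_take_of_smul_eq_sum [NoZeroDivisors R] {n : ℕ} {y : Fin n → M}
    (hy : LinearIndependent R y) (j : Fin n) {b : R} {c : Fin n → R} (hcj : c j ≠ 0) {w : M}
    (hw : b • w = ∑ i, c i • y i) :
    LinearIndependent R (Fin.snoc (Fin.take j j.is_le' y) w) := by
  -- if `a • w` lies in the span of `y 0, …, y (j-1)`, then so does `∑ (a * c i) • y i`,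
  -- whose `j`-th coefficient must therefore vanish
  refine (hy.comp _ (Fin.castLE_injective _)).finSnoc' _ _ fun a z hz haz => ?_
  have hz' : z ∈ span R (y '' {i | (i : ℕ) < j}) := by
    rwa [Set.range_comp, Fin.range_castLE] at hz
  have hsum : ∑ i, (a * c i) • y i = -(b • z) := by
    simp only [← smul_smul, ← Finset.smul_sum, ← hw, smul_comm a b, eq_neg_of_add_eq_zero_left haz,
      smul_neg]
  have hmem : ∑ i, (a * c i) • y i ∈ span R (y '' {i | (i : ℕ) < j}) :=
    hsum ▸ neg_mem (smul_mem _ b hz')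
  exact (mul_eq_zero.1 (hy.eq_zero_of_sum_mem_span_image hmem (lt_irrefl (j : ℕ)))).resolve_right hcj

end LinearAlgebra

section degA

variable {k : Type*} [Field k]

lemma degA_zero : degA (0 : k[X]) = ⊥ := by
  simp [degA]

lemma degA_ne_bot {a : k[X]} (ha : a ≠ 0) : degA a ≠ ⊥ := by
  simp [degA, ha]

lemma degA_C {c : k} (hc : c ≠ 0) : degA (C c) = 0 := by
  simp [degA, degree_C hc]

lemma degA_lt_degA {a b : k[X]} (h : a.degree < b.degree) : degA a < degA b :=
  Nat.strictMono_cast.withBot_map h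

end degA

structure IsDegreeNorm (k : Type*) {L : Type*} [Field k] [AddCommGroup L] [Module k[X] L]
    (N : L → WithBot ℝ) : Prop where
  add_le : ∀ x y, N (x + y) ≤ max (N x) (N y)
  smul : ∀ (a : k[X]) x, N (a • x) = degA a + N x
  eq_bot_iff : ∀ x, N x = ⊥ ↔ x = 0

namespace IsDegreeNorm

variable {k L : Type*} [Field k] [AddCommGroup L] [Module k[X] L] {N : L → WithBot ℝ}
  (hN : IsDegreeNorm k N)
include hN

lemma map_zero : N 0 = ⊥ :=
  (hN.eq_bot_iff 0).2 rfl

lemma ne_bot {x : L} (hx : x ≠ 0) : N x ≠ ⊥ :=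
  fun h => hx ((hN.eq_bot_iff x).1 h)

lemma map_neg (x : L) : N (-x) = N x := by
  rw [← neg_one_smul k[X] x, hN.smul, ← C_1, ← C_neg, degA_C (neg_ne_zero.2 one_ne_zero),
    zero_add]

lemma sub_le (x y : L) : N (x - y) ≤ max (N x) (N y) := by
  rw [sub_eq_add_neg, ← hN.map_neg y]
  exact hN.add_le _ _

lemma add_eq_of_lt {u v : L} (h : N u < N v) : N (u + v) = N v := by
  refine le_antisymm ((hN.add_le u v).trans (max_le h.le le_rfl)) ?_
  have h' := hN.sub_le (u + v) u
  rw [add_sub_cancel_left] at h'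
  exact (le_max_iff.1 h').resolve_right (not_le.2 h)

lemma sum_le {ι : Type*} (s : Finset ι) (f : ι → L) :
    N (∑ i ∈ s, f i) ≤ s.sup fun i => N (f i) := by
  classical
  induction s using Finset.induction_on with
  | empty => simp [hN.map_zero]
  | insert a s ha ih =>
    rw [Finset.sum_insert ha, Finset.sup_insert]
    exact (hN.add_le _ _).trans (max_le_max le_rfl ih)

lemma sum_smul_le {ι : Type*} (s : Finset ι) (a : ι → k[X]) (y : ι → L) :
    N (∑ i ∈ s, a i • y i) ≤ s.sup fun i => degA (a i) + N (y i) := by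
  simpa only [hN.smul] using hN.sum_le s fun i => a i • y i

variable [Module k L] [IsScalarTower k k[X] L]

lemma map_smul_of_ne_zero {c : k} (hc : c ≠ 0) (x : L) : N (c • x) = N x := by
  rw [← algebraMap_smul k[X] c x, algebraMap_eq, hN.smul, degA_C hc, zero_add]

lemma linearIndependent_of_injective {ι : Type*} {g : ι → L} (hg : ∀ i, g i ≠ 0)
    (hinj : Injective (N ∘ g)) : LinearIndependent k g := by
  classical
  rw [linearIndependent_iff']
  intro s c hsum i hi
  by_contra hci
  obtain ⟨j, hj, hjmax⟩ := s.exists_max_image (fun i => N (c i • g i)) ⟨i, hi⟩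
  have hcj : c j ≠ 0 := fun h0 => hN.ne_bot (hg i) <| le_bot_iff.1 <| by
    simpa [h0, hN.map_zero, hN.map_smul_of_ne_zero hci] using hjmax i hi
  have hjpos : ⊥ < N (c j • g j) := by
    rw [bot_lt_iff_ne_bot, hN.map_smul_of_ne_zero hcj]
    exact hN.ne_bot (hg j)
  -- the other terms are strictly shorter, so the sum has the norm of the `j`-th one
  have hrest : N (∑ l ∈ s.erase j, c l • g l) < N (c j • g j) := by
    refine (hN.sum_le _ _).trans_lt ((Finset.sup_lt_iff hjpos).2 fun l hl => ?_)
    refine (hjmax l (Finset.mem_of_mem_erase hl)).lt_of_ne fun heq => ?_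
    by_cases hcl : c l = 0
    · rw [hcl, zero_smul, hN.map_zero] at heq
      exact hjpos.ne heq
    · rw [hN.map_smul_of_ne_zero hcl, hN.map_smul_of_ne_zero hcj] at heq
      exact Finset.ne_of_mem_erase hl (hinj heq)
  have h := hN.add_eq_of_lt hrest
  rw [Finset.sum_erase_add s _ hj, hsum, hN.map_zero] at h
  exact hjpos.ne h

lemma finite_image_setOf_le (hfin : ∀ r : ℝ, ∃ S : Finset L, {x | N x ≤ r} ⊆ span k (S : Set L))
    (r : ℝ) : (N '' {x | N x ≤ r}).Finite := by
  obtain ⟨S, hS⟩ := hfin r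
  have hV : (N '' {x | x ≠ 0 ∧ N x ≤ r}).Finite := by
    choose g hg hgv using fun v : N '' {x | x ≠ 0 ∧ N x ≤ r} => v.2
    have hli : LinearIndependent k g :=
      hN.linearIndependent_of_injective (fun v => (hg v).1)
        fun v w h => Subtype.ext ((hgv v).symm.trans (h.trans (hgv w)))
    have := hli.finite_of_le_span_finite g S (Set.range_subset_iff.2 fun v => hS (hg v).2)
    exact Set.finite_coe_iff.1 this
  refine (hV.insert ⊥).subset ?_
  rintro _ ⟨x, hx, rfl⟩
  by_cases h0 : x = 0
  · simp [h0, hN.map_zero]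
  · exact Set.mem_insert_of_mem _ ⟨x, ⟨h0, hx⟩, rfl⟩

lemma wellFounded (hfin : ∀ r : ℝ, ∃ S : Finset L, {x | N x ≤ r} ⊆ span k (S : Set L)) :
    WellFounded (InvImage (· < ·) N) := by
  refine WellFounded.wellFounded_iff_has_min.2 fun C ⟨x₀, hx₀⟩ => ?_
  by_cases h : N x₀ = ⊥
  · exact ⟨x₀, hx₀, fun y _ => by simp [InvImage, h]⟩
  obtain ⟨r, hr⟩ := WithBot.ne_bot_iff_exists.1 h
  obtain ⟨_, ⟨x, ⟨hxC, hxr⟩, rfl⟩, hmin⟩ :=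
    Set.exists_min_image (N '' {x | x ∈ C ∧ N x ≤ r}) id
      ((hN.finite_image_setOf_le hfin r).subset (Set.image_mono fun x hx => hx.2))
      ⟨_, ⟨x₀, ⟨hx₀, hr.ge⟩, rfl⟩⟩
  refine ⟨x, hxC, fun y hy => not_lt.2 ?_⟩
  by_cases hyr : N y ≤ r
  · exact hmin _ ⟨y, ⟨hy, hyr⟩, rfl⟩
  · exact hxr.trans (not_le.1 hyr).le

end IsDegreeNorm

section Greedy

variable (R : Type*) {M α : Type*} [CommRing R] [AddCommGroup M] [Module R M]
  [LinearOrder α] (N : M → α)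

structure IsGreedy {n : ℕ} (y : Fin n → M) : Prop where
  linearIndependent : LinearIndependent R y
  le_of_linearIndependent : ∀ (j : Fin n) (x : M),
    LinearIndependent R (Fin.snoc (Fin.take j j.is_le' y) x) → N (y j) ≤ N x

variable {R N}

theorem exists_isGreedy [IsDomain R] (hN : WellFounded (InvImage (· < ·) N)) {n : ℕ}
    (hn : ∃ x : Fin n → M, LinearIndependent R x) : ∃ y : Fin n → M, IsGreedy R N y := by
  obtain ⟨x, hx⟩ := hn
  suffices ∀ i ≤ n, ∃ y : Fin i → M, IsGreedy R N y from this n le_rfl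
  intro i
  induction i with
  | zero => exact fun _ => ⟨Fin.elim0, linearIndependent_empty_type, fun j => j.elim0⟩
  | succ i ih =>
    intro hi
    obtain ⟨y, hy⟩ := ih (by omega)
    obtain ⟨j, hj⟩ := exists_linearIndependent_snoc hy.linearIndependent hx hi
    obtain ⟨z, hz, hzmin⟩ := hN.has_min {z | LinearIndependent R (Fin.snoc y z)} ⟨x j, hj⟩
    refine ⟨Fin.snoc y z, hz, fun l w hw => ?_⟩
    induction l using Fin.lastCases with
    | last =>
      rw [Fin.snoc_last]
      exact not_lt.1 (hzmin w (by simpa using hw))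
    | cast l =>
      rw [Fin.snoc_castSucc]
      exact hy.le_of_linearIndependent l w (by simpa [Fin.take_snoc_of_le l.is_le'] using hw)

lemma IsGreedy.monotone {n : ℕ} {y : Fin n → M} (hy : IsGreedy R N y) : Monotone (N ∘ y) := by
  intro i j hij
  refine hy.le_of_linearIndependent i (y j) ?_
  show LinearIndependent R (Fin.snoc (y ∘ Fin.castLE i.is_le') (y j))
  rw [← Fin.comp_snoc]
  refine hy.linearIndependent.comp _
    (Fin.snoc_injective_of_injective (Fin.castLE_injective _) ?_)
  rintro ⟨l, hl⟩
  have := l.is_lt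
  rw [← hl, Fin.le_def, Fin.val_castLE] at hij
  omega

lemma IsGreedy.le_of_smul_eq_sum [NoZeroDivisors R] {n : ℕ} {y : Fin n → M}
    (hy : IsGreedy R N y) (j : Fin n) {b : R} {c : Fin n → R} (hcj : c j ≠ 0) {w : M}
    (hw : b • w = ∑ i, c i • y i) : N (y j) ≤ N w :=
  hy.le_of_linearIndependent j w (hy.linearIndependent.snoc_take_of_smul_eq_sum j hcj hw)

variable [OrderBot α]

variable (R N) in
def independentMaxNorms (m : ℕ) : Set α :=
  {w | ∃ x : Fin m → M, LinearIndependent R x ∧ Finset.univ.sup (fun j => N (x j)) = w}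

lemma independentMaxNorms_subset {M' : Type*} [AddCommGroup M'] [Module R M'] {N' : M' → α}
    (f : M →ₗ[R] M') (hf : Injective f) (hN : ∀ x, N' (f x) = N x) (m : ℕ) :
    independentMaxNorms R N m ⊆ independentMaxNorms R N' m := by
  rintro _ ⟨x, hx, rfl⟩
  exact ⟨f ∘ x, hx.map' f (LinearMap.ker_eq_bot.2 hf), by simp [hN]⟩

lemma independentMaxNorms_eq_of_linearEquiv {M' : Type*} [AddCommGroup M'] [Module R M']
    {N' : M' → α} (e : M ≃ₗ[R] M') (he : ∀ x, N' (e x) = N x) (m : ℕ) :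
    independentMaxNorms R N' m = independentMaxNorms R N m :=
  (independentMaxNorms_subset e.symm.toLinearMap e.symm.injective
    (fun x => by simpa using (he (e.symm x)).symm) m).antisymm
    (independentMaxNorms_subset e.toLinearMap e.injective he m)

lemma IsGreedy.apply_eq_of_isLeast [IsDomain R] {n : ℕ} {y : Fin n → M} (hy : IsGreedy R N y)
    (i : Fin n) {w : α} (hw : IsLeast (independentMaxNorms R N (i + 1)) w) : N (y i) = w := by
  refine le_antisymm ?_ (hw.2 ⟨Fin.take (i + 1) i.is_lt y,
    hy.linearIndependent.comp _ (Fin.castLE_injective _), ?_⟩)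
  · obtain ⟨x, hx, rfl⟩ := hw.1
    obtain ⟨j, hj⟩ := exists_linearIndependent_snoc
      (hy.linearIndependent.comp _ (Fin.castLE_injective i.is_le')) hx (Nat.lt_succ_self i)
    exact (hy.le_of_linearIndependent i (x j) hj).trans
      (Finset.le_sup (f := fun l => N (x l)) (Finset.mem_univ j))
  · refine le_antisymm (Finset.sup_le fun l _ => hy.monotone (Nat.lt_succ_iff.1 l.is_lt)) ?_
    exact Finset.le_sup (f := fun l => N (Fin.take (i + 1) i.is_lt y l))
      (Finset.mem_univ (Fin.last i))

end Greedy

namespace IsGreedy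

variable {k L : Type*} [Field k] [AddCommGroup L] [Module k[X] L] {N : L → WithBot ℝ}
  {n : ℕ} {y : Fin n → L}

theorem map_sum_smul (hN : IsDegreeNorm k N) (hy : IsGreedy k[X] N y) (a : Fin n → k[X]) :
    N (∑ i, a i • y i) = Finset.univ.sup fun i => degA (a i) + N (y i) := by
  classical
  refine le_antisymm (hN.sum_smul_le _ a y) (not_lt.1 fun hlt => ?_)
  set m := Finset.univ.sup fun i => degA (a i) + N (y i)
  have hm : ⊥ < m := bot_le.trans_lt hlt
  set T := Finset.univ.filter fun i => degA (a i) + N (y i) = m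
  have hT : T.Nonempty := by
    obtain ⟨j, -, hj⟩ := Finset.exists_mem_eq_sup_of_bot_lt hm
    exact ⟨j, Finset.mem_filter.2 ⟨Finset.mem_univ j, hj.symm⟩⟩
  have ha : ∀ i ∈ T, a i ≠ 0 := fun i hi h0 => by
    rw [Finset.mem_filter, h0, degA_zero, WithBot.bot_add] at hi
    exact hm.ne hi.2
  obtain ⟨j, hjT, hjmin⟩ := T.exists_min_image (fun i => (a i).natDegree) hT
  set d := (a j).natDegree
  -- the leading terms of the maximal summands, divided by `X ^ d`
  set c : Fin n → k[X] := fun i =>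
    if i ∈ T then monomial ((a i).natDegree - d) (a i).leadingCoeff else 0
  have hcj : c j ≠ 0 := by simp [c, hjT, ha j hjT]
  have hrest : N (∑ i, (a i - X ^ d * c i) • y i) < m := by
    refine (hN.sum_smul_le _ _ y).trans_lt ((Finset.sup_lt_iff hm).2 fun i _ => ?_)
    by_cases hi : i ∈ T
    · have hlead : a i - X ^ d * c i = (a i).eraseLead := by
        simp only [c, if_pos hi, X_pow_mul_monomial, Nat.sub_add_cancel (hjmin i hi),
          self_sub_monomial_natDegree_leadingCoeff]
      rw [hlead, ← (Finset.mem_filter.1 hi).2]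
      exact WithBot.add_lt_add_right (hN.ne_bot (hy.linearIndependent.ne_zero i))
        (degA_lt_degA (degree_eraseLead_lt (ha i hi)))
    · simp only [c, if_neg hi, mul_zero, sub_zero]
      exact (Finset.le_sup (f := fun i => degA (a i) + N (y i)) (Finset.mem_univ i)).lt_of_ne
        fun h => hi (Finset.mem_filter.2 ⟨Finset.mem_univ i, h⟩)
  set w := ∑ i, c i • y i
  have hXw : N ((X : k[X]) ^ d • w) < degA (X ^ d : k[X]) + N (y j) := by
    have hdeg : degA (X ^ d : k[X]) = degA (a j) := by
      rw [degA, degA, degree_X_pow, degree_eq_natDegree (ha j hjT)]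
    have hsplit : (X : k[X]) ^ d • w = ∑ i, a i • y i - ∑ i, (a i - X ^ d * c i) • y i := by
      simp only [w, Finset.smul_sum, smul_smul, sub_smul, Finset.sum_sub_distrib, sub_sub_cancel]
    rw [hdeg, (Finset.mem_filter.1 hjT).2, hsplit]
    exact (hN.sub_le _ _).trans_lt (max_lt hlt hrest)
  rw [hN.smul, WithBot.add_lt_add_iff_left (degA_ne_bot (pow_ne_zero d X_ne_zero))] at hXw
  exact not_le.2 hXw (hy.le_of_smul_eq_sum j hcj (one_smul _ w))

theorem span_eq_top (hN : IsDegreeNorm k N) (hy : IsGreedy k[X] N y)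
    (hmax : ¬ ∃ x : Fin (n + 1) → L, LinearIndependent k[X] x) :
    span k[X] (Set.range y) = ⊤ := by
  classical
  refine eq_top_iff.2 fun x _ => by_contra fun hx => ?_
  obtain ⟨b, hb, hbx⟩ := exists_smul_mem_span_of_not_linearIndependent_snoc
    hy.linearIndependent (x := x) fun h => hmax ⟨_, h⟩
  obtain ⟨a, ha⟩ := (mem_span_range_iff_exists_fun k[X]).1 hbx
  -- reduce `x` modulo the span, so that `b • x'` has coefficients of degree less than `deg b`
  set x' := x - ∑ i, (a i / b) • y i
  have hx' : x' ≠ 0 := fun h => hx <| by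
    rw [sub_eq_zero.1 h]
    exact sum_mem fun i _ => smul_mem _ _ (subset_span (Set.mem_range_self i))
  have hbx' : b • x' = ∑ i, (a i % b) • y i := by
    simp only [x', smul_sub, Finset.smul_sum, smul_smul, ← ha, ← Finset.sum_sub_distrib, ← sub_smul,
      EuclideanDomain.mod_eq_sub_mul_div]
  have hpos : ⊥ < Finset.univ.sup fun i => degA (a i % b) + N (y i) := by
    refine (bot_lt_iff_ne_bot.2 ?_).trans_le (hbx' ▸ hN.sum_smul_le _ _ y)
    rw [hN.smul]
    exact WithBot.add_ne_bot.2 ⟨degA_ne_bot hb, hN.ne_bot hx'⟩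
  obtain ⟨j, -, hj⟩ := Finset.exists_mem_eq_sup_of_bot_lt hpos
  have hj0 : a j % b ≠ 0 := fun h0 => by
    rw [hj, h0, degA_zero, WithBot.bot_add] at hpos
    exact hpos.ne rfl
  have hlt : N (b • x') < degA b + N (y j) :=
    (hbx' ▸ hN.sum_smul_le _ _ y).trans_lt <| hj ▸ WithBot.add_lt_add_right
      (hN.ne_bot (hy.linearIndependent.ne_zero j)) (degA_lt_degA (EuclideanDomain.mod_lt _ hb))
  rw [hN.smul, WithBot.add_lt_add_iff_left (degA_ne_bot hb)] at hlt
  exact not_le.2 hlt (hy.le_of_smul_eq_sum j hj0 hbx')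

end IsGreedy

theorem exists_isometry_of_isGreedy {k L L' : Type*} [Field k] [AddCommGroup L] [AddCommGroup L']
    [Module k[X] L] [Module k[X] L'] {N : L → WithBot ℝ} {N' : L' → WithBot ℝ}
    (hN : IsDegreeNorm k N) (hN' : IsDegreeNorm k N') {n : ℕ} {y : Fin n → L} {y' : Fin n → L'}
    (hy : IsGreedy k[X] N y) (hy' : IsGreedy k[X] N' y') (hs : span k[X] (Set.range y) = ⊤)
    (hs' : span k[X] (Set.range y') = ⊤) (h : ∀ i, N (y i) = N' (y' i)) :
    ∃ e : L ≃ₗ[k[X]] L', ∀ x, N' (e x) = N x := by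
  let B := Module.Basis.mk hy.linearIndependent hs.ge
  let B' := Module.Basis.mk hy'.linearIndependent hs'.ge
  refine ⟨B.equiv B' (Equiv.refl _), fun x => ?_⟩
  obtain ⟨a, rfl⟩ := (mem_span_range_iff_exists_fun k[X]).1 (hs ▸ mem_top : x ∈ span k[X] _)
  have he : ∀ i, B.equiv B' (Equiv.refl _) (y i) = y' i := fun i => by
    simpa [B, B'] using B.equiv_apply i B' (Equiv.refl _)
  simp only [map_sum, map_smul, he]
  rw [hy'.map_sum_smul hN', hy.map_sum_smul hN]
  simp only [h]

theorem stmt12_general {k : Type*} [Field k] {L L' : Type*} [AddCommGroup L] [AddCommGroup L']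
    [Module (Polynomial k) L] [Module (Polynomial k) L']
    [Module k L] [Module k L'] [IsScalarTower k (Polynomial k) L]
    [IsScalarTower k (Polynomial k) L']
    (N : L → WithBot ℝ) (N' : L' → WithBot ℝ)
    (hadd : ∀ x y : L, N (x + y) ≤ max (N x) (N y))
    (hadd' : ∀ x y : L', N' (x + y) ≤ max (N' x) (N' y))
    (hsmul : ∀ (a : Polynomial k) (x : L), N (a • x) = degA a + N x)
    (hsmul' : ∀ (a : Polynomial k) (x : L'), N' (a • x) = degA a + N' x)
    (hzero : ∀ x : L, N x = ⊥ ↔ x = 0)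
    (hzero' : ∀ x : L', N' x = ⊥ ↔ x = 0)
    (hfin : ∀ r : ℝ, ∃ S : Finset L,
      {x : L | N x ≤ (r : ℝ)} ⊆ (Submodule.span k (S : Set L) : Set L))
    (hfin' : ∀ r : ℝ, ∃ S : Finset L',
      {x : L' | N' x ≤ (r : ℝ)} ⊆ (Submodule.span k (S : Set L') : Set L'))
    (n : ℕ)
    (hrk : ∃ x : Fin n → L, LinearIndependent (Polynomial k) x)
    (hrk' : ∃ x : Fin n → L', LinearIndependent (Polynomial k) x)
    (hmax : ¬ ∃ x : Fin (n + 1) → L, LinearIndependent (Polynomial k) x)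
    (hmax' : ¬ ∃ x : Fin (n + 1) → L', LinearIndependent (Polynomial k) x)
    (r r' : Fin n → ℝ)
    (hsm : ∀ i : Fin n, IsLeast
      {w : WithBot ℝ | ∃ x : Fin (i.1 + 1) → L,
        LinearIndependent (Polynomial k) x ∧
        Finset.univ.sup (fun j => N (x j)) = w}
      ((r i : ℝ) : WithBot ℝ))
    (hsm' : ∀ i : Fin n, IsLeast
      {w : WithBot ℝ | ∃ x : Fin (i.1 + 1) → L',
        LinearIndependent (Polynomial k) x ∧
        Finset.univ.sup (fun j => N' (x j)) = w}
      ((r' i : ℝ) : WithBot ℝ)) :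
    (∃ e : L ≃ₗ[Polynomial k] L', ∀ x : L, N' (e x) = N x) ↔ r = r' := by
  have hN : IsDegreeNorm k N := ⟨hadd, hsmul, hzero⟩
  have hN' : IsDegreeNorm k N' := ⟨hadd', hsmul', hzero'⟩
  constructor
  · rintro ⟨e, he⟩
    funext i
    have hsm'' : IsLeast (independentMaxNorms k[X] N (i + 1)) (r' i) :=
      independentMaxNorms_eq_of_linearEquiv e he _ ▸ hsm' i
    exact_mod_cast (hsm i).unique hsm''
  · rintro rfl
    obtain ⟨y, hy⟩ := exists_isGreedy (hN.wellFounded hfin) hrk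
    obtain ⟨y', hy'⟩ := exists_isGreedy (hN'.wellFounded hfin') hrk'
    refine exists_isometry_of_isGreedy hN hN' hy hy' (hy.span_eq_top hN hmax)
      (hy'.span_eq_top hN' hmax') fun i => ?_
    rw [hy.apply_eq_of_isLeast i (hsm i), hy'.apply_eq_of_isLeast i (hsm' i)]

/-- Two lattices over `A = k[t]` (both of rank `n`, with successive
minima vectors `r` and `r'`) are isometric iff they have the same vector of successive
minima. -/
theorem stmt12 {k : Type*} [Field k] {L L' : Type*} [AddCommGroup L] [AddCommGroup L']
    [Module (Polynomial k) L] [Module (Polynomial k) L']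
    [Module k L] [Module k L'] [IsScalarTower k (Polynomial k) L]
    [IsScalarTower k (Polynomial k) L']
    [Module.Finite (Polynomial k) L] [Module.Finite (Polynomial k) L']
    (N : L → WithBot ℝ) (N' : L' → WithBot ℝ)
    (hadd : ∀ x y : L, N (x + y) ≤ max (N x) (N y))
    (hadd' : ∀ x y : L', N' (x + y) ≤ max (N' x) (N' y))
    (hsmul : ∀ (a : Polynomial k) (x : L), N (a • x) = degA a + N x)
    (hsmul' : ∀ (a : Polynomial k) (x : L'), N' (a • x) = degA a + N' x)
    (hzero : ∀ x : L, N x = ⊥ ↔ x = 0)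
    (hzero' : ∀ x : L', N' x = ⊥ ↔ x = 0)
    (hfin : ∀ r : ℝ, ∃ S : Finset L,
      {x : L | N x ≤ (r : ℝ)} ⊆ (Submodule.span k (S : Set L) : Set L))
    (hfin' : ∀ r : ℝ, ∃ S : Finset L',
      {x : L' | N' x ≤ (r : ℝ)} ⊆ (Submodule.span k (S : Set L') : Set L'))
    (n : ℕ)
    (hrk : ∃ x : Fin n → L, LinearIndependent (Polynomial k) x)
    (hrk' : ∃ x : Fin n → L', LinearIndependent (Polynomial k) x)
    (hmax : ¬ ∃ x : Fin (n + 1) → L, LinearIndependent (Polynomial k) x)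
    (hmax' : ¬ ∃ x : Fin (n + 1) → L', LinearIndependent (Polynomial k) x)
    (r r' : Fin n → ℝ) (hmono : Monotone r) (hmono' : Monotone r')
    (hsm : ∀ i : Fin n, IsLeast
      {w : WithBot ℝ | ∃ x : Fin (i.1 + 1) → L,
        LinearIndependent (Polynomial k) x ∧
        Finset.univ.sup (fun j => N (x j)) = w}
      ((r i : ℝ) : WithBot ℝ))
    (hsm' : ∀ i : Fin n, IsLeast
      {w : WithBot ℝ | ∃ x : Fin (i.1 + 1) → L',
        LinearIndependent (Polynomial k) x ∧
        Finset.univ.sup (fun j => N' (x j)) = w}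
      ((r' i : ℝ) : WithBot ℝ)) :
    (∃ e : L ≃ₗ[Polynomial k] L', ∀ x : L, N' (e x) = N x) ↔ r = r' :=
  stmt12_general N N' hadd hadd' hsmul hsmul' hzero hzero' hfin hfin' n hrk hrk' hmax hmax' r r' hsm
    hsm'
end

section
/- Let B be a basis of an n-dimensional normed space E over K = k(t), and let κ = #Sig(E) be the number of distinct classes mod ℤ of norms of nonzero vectors of E. Any sequence of reduction steps (each replacing some b ∈ B by b + α with α an A-linear combination of B \ {b} and strictly smaller norm) transforming B into a reduced basis has length at most κ·⌊OD(B)⌋ + (κ-1)·n. -/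
/-!
A reduction step adds to one basis vector a combination of the others, so it does not change the
determinant `d` of the basis in the coordinates of a reduced basis of `E`. Hadamard's inequality
`|d| ≤ vol(C) - vol(E)` for the final basis `C` therefore bounds the total decrease
`∑ᵢ (‖bᵢ‖ - ‖cᵢ‖) = vol(B) - vol(C)` by `OD(B)`. If the `i`-th vector is changed `kᵢ` times, its
norm takes `kᵢ + 1` distinct values in an interval of length `Dᵢ = ‖bᵢ‖ - ‖cᵢ‖`. These values
fall into the `κ` classes of `Sig(E)`, and two distinct values in one class differ by at least
`1`, so `kᵢ + 1 ≤ κ (⌊Dᵢ⌋ + 1)`. Summing over `i` and using `∑ᵢ ⌊Dᵢ⌋ ≤ ⌊OD(B)⌋` gives the bound.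
-/

open scoped Classical in
/-- The degree function `|·| = -v_∞` on `K = k(t)`, with `|0| = -∞`. -/
noncomputable def degK {k : Type*} [Field k] (a : RatFunc k) : WithBot ℝ :=
  if a = 0 then ⊥ else ((a.intDegree : ℝ) : WithBot ℝ)

open Finset Function

section degK

variable {k : Type*} [Field k]

lemma degK_zero : degK (0 : RatFunc k) = ⊥ := if_pos rfl

lemma degK_of_ne {a : RatFunc k} (h : a ≠ 0) : degK a = ((a.intDegree : ℝ) : WithBot ℝ) :=
  if_neg h

lemma degK_one : degK (1 : RatFunc k) = 0 := by
  rw [degK_of_ne (one_ne_zero (α := RatFunc k)), RatFunc.intDegree_one, Int.cast_zero,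
    WithBot.coe_zero]

lemma degK_neg (a : RatFunc k) : degK (-a) = degK a := by
  rcases eq_or_ne a 0 with rfl | h
  · rw [neg_zero]
  · rw [degK_of_ne (neg_ne_zero.2 h), degK_of_ne h, RatFunc.intDegree_neg]

lemma degK_units_zsmul (u : ℤˣ) (a : RatFunc k) : degK (u • a) = degK a := by
  rcases Int.units_eq_one_or u with rfl | rfl
  · rw [one_smul]
  · rw [Units.neg_smul, one_smul, degK_neg]

lemma degK_mul (a b : RatFunc k) : degK (a * b) = degK a + degK b := by
  rcases eq_or_ne a 0 with rfl | ha
  · rw [zero_mul, degK_zero, WithBot.bot_add]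
  rcases eq_or_ne b 0 with rfl | hb
  · rw [mul_zero, degK_zero, WithBot.add_bot]
  rw [degK_of_ne (mul_ne_zero ha hb), degK_of_ne ha, degK_of_ne hb,
    RatFunc.intDegree_mul ha hb, ← WithBot.coe_add, Int.cast_add]

lemma degK_add_le (a b : RatFunc k) : degK (a + b) ≤ max (degK a) (degK b) := by
  rcases eq_or_ne (a + b) 0 with hab | hab
  · rw [hab, degK_zero]
    exact bot_le
  rcases eq_or_ne b 0 with rfl | hb
  · rw [add_zero]
    exact le_max_left _ _
  rcases eq_or_ne a 0 with rfl | ha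
  · rw [zero_add]
    exact le_max_right _ _
  rw [degK_of_ne hab, degK_of_ne ha, degK_of_ne hb, ← WithBot.coe_max, WithBot.coe_le_coe,
    ← Int.cast_max, Int.cast_le]
  exact RatFunc.intDegree_add_le hb hab

lemma degK_prod {ι : Type*} (s : Finset ι) (f : ι → RatFunc k) :
    degK (∏ i ∈ s, f i) = ∑ i ∈ s, degK (f i) := by
  induction s using Finset.cons_induction with
  | empty => rw [prod_empty, sum_empty, degK_one]
  | cons a s ha ih => rw [prod_cons, sum_cons, degK_mul, ih]

lemma degK_sum_add_le {ι : Type*} {s : Finset ι} {f : ι → RatFunc k} {c d : WithBot ℝ}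
    (h : ∀ i ∈ s, degK (f i) + c ≤ d) : degK (∑ i ∈ s, f i) + c ≤ d := by
  induction s using Finset.cons_induction with
  | empty => rw [sum_empty, degK_zero, WithBot.bot_add]; exact bot_le
  | cons a s ha ih =>
    rw [forall_mem_cons] at h
    rw [sum_cons]
    calc degK (f a + ∑ i ∈ s, f i) + c ≤ max (degK (f a)) (degK (∑ i ∈ s, f i)) + c := by
          gcongr; exact degK_add_le _ _
      _ = max (degK (f a) + c) (degK (∑ i ∈ s, f i) + c) := (max_add_add_right _ _ _).symm
      _ ≤ d := max_le h.1 (ih h.2)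

lemma Matrix.degK_det_add_le {ι : Type*} [Fintype ι] [DecidableEq ι] (M : Matrix ι ι (RatFunc k))
    {f g : ι → WithBot ℝ} (h : ∀ i j, degK (M i j) + f i ≤ g j) :
    degK M.det + ∑ i, f i ≤ ∑ j, g j := by
  rw [Matrix.det_apply]
  refine degK_sum_add_le fun σ _ => ?_
  rw [degK_units_zsmul, degK_prod, ← Equiv.sum_comp σ f, ← sum_add_distrib]
  exact sum_le_sum fun i _ => h (σ i) i

end degK

/-- Each class mod `ℤ` contributes at most one point to each of the `⌊hi - lo⌋₊ + 1` unit slots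
`⌊x - lo⌋₊`. -/
lemma card_le_of_subset_Icc_of_mem_add_int {κ : ℕ} (ρ : Fin κ → ℝ) {S : Finset ℝ} {lo hi : ℝ}
    (hS : ∀ x ∈ S, lo ≤ x ∧ x ≤ hi) (hρ : ∀ x ∈ S, ∃ (j : Fin κ) (z : ℤ), x = ρ j + z) :
    #S ≤ κ * (⌊hi - lo⌋₊ + 1) := by
  let slot (x : ℝ) (p : Fin κ × ℕ) : Prop := (∃ z : ℤ, x = ρ p.1 + z) ∧ ⌊x - lo⌋₊ = p.2
  have hslot : ∀ x ∈ S, ∃ p ∈ (univ : Finset (Fin κ)) ×ˢ range (⌊hi - lo⌋₊ + 1), slot x p := by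
    intro x hx
    obtain ⟨j, z, hz⟩ := hρ x hx
    refine ⟨(j, ⌊x - lo⌋₊), mem_product.2 ⟨mem_univ j, mem_range.2 ?_⟩, ⟨z, hz⟩, rfl⟩
    exact Nat.lt_succ_of_le (Nat.floor_le_floor (by linarith [hS x hx]))
  have hsub : ∀ p ∈ (univ : Finset (Fin κ)) ×ˢ range (⌊hi - lo⌋₊ + 1),
      ({x ∈ S | slot x p} : Set ℝ).Subsingleton := by
    rintro ⟨j, q⟩ - x ⟨hx, ⟨zx, rfl⟩, hqx⟩ y ⟨hy, ⟨zy, rfl⟩, hqy⟩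
    have hfloor : ⌊ρ j + zx - lo⌋ = ⌊ρ j + zy - lo⌋ := by
      rw [← Int.natCast_floor_eq_floor (sub_nonneg.2 (hS _ hx).1),
        ← Int.natCast_floor_eq_floor (sub_nonneg.2 (hS _ hy).1)]
      exact congrArg _ (hqx.trans hqy.symm)
    have h := Int.abs_sub_lt_one_of_floor_eq_floor hfloor
    rw [sub_sub_sub_cancel_right, add_sub_add_left_eq_sub, ← Int.cast_sub, ← Int.cast_abs,
      ← Int.cast_one, Int.cast_lt, Int.abs_lt_one_iff, sub_eq_zero] at h
    rw [h]
  simpa using card_le_card_of_forall_subsingleton slot hslot hsub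

lemma card_drops_add_one_le {κ m : ℕ} (ρ : Fin κ → ℝ) {u : ℕ → ℝ}
    (hmono : ∀ s < m, u (s + 1) ≤ u s) (hρ : ∀ s ≤ m, ∃ (j : Fin κ) (z : ℤ), u s = ρ j + z) :
    (#{s ∈ range m | u (s + 1) < u s} : ℤ) + 1 ≤ κ * (⌊u 0 - u m⌋ + 1) := by
  set D := {s ∈ range m | u (s + 1) < u s}
  have hanti : AntitoneOn u (Set.Iic m) :=
    antitoneOn_of_succ_le Set.ordConnected_Iic fun s _ _ hs => hmono s (Order.succ_le_iff.1 hs)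
  have hle : ∀ s ∈ insert m D, s ≤ m := by
    simp only [D, mem_insert, mem_filter, mem_range]
    omega
  have hstrict : StrictAntiOn u (insert m D : Finset ℕ) := by
    intro x hx y hy hxy
    have hxD : x ∈ D := (mem_insert.1 hx).resolve_left (by have := hle y hy; omega)
    obtain ⟨hxm, hdrop⟩ := mem_filter.1 hxD
    exact (hanti (show x + 1 ≤ m from mem_range.1 hxm) (hle y hy) hxy).trans_lt hdrop
  have hcard : #D + 1 ≤ κ * (⌊u 0 - u m⌋₊ + 1) := by
    calc #D + 1 = #(insert m D) := (card_insert_of_notMem (by simp [D])).symm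
      _ = #((insert m D).image u) := (card_image_of_injOn hstrict.injOn).symm
      _ ≤ κ * (⌊u 0 - u m⌋₊ + 1) := by
        refine card_le_of_subset_Icc_of_mem_add_int ρ ?_ ?_ <;>
          simp only [mem_image, forall_exists_index, and_imp, forall_apply_eq_imp_iff₂]
        · exact fun s hs => ⟨hanti (hle s hs) (le_refl m) (hle s hs),
            hanti (Nat.zero_le m) (hle s hs) (Nat.zero_le s)⟩
        · exact fun s hs => hρ s (hle s hs)
  have hm0 : u m ≤ u 0 := hanti (Nat.zero_le m) (le_refl m) (Nat.zero_le m)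
  rw [← Int.natCast_floor_eq_floor (sub_nonneg.2 hm0)]
  exact_mod_cast hcard

lemma le_mul_floor_sum_of_steps {κ m : ℕ} {ι : Type*} [Fintype ι] (ρ : Fin κ → ℝ)
    (w : ℕ → ι → ℝ) (hmono : ∀ s < m, ∀ i, w (s + 1) i ≤ w s i)
    (hdrop : ∀ s < m, ∃ i, w (s + 1) i < w s i)
    (hρ : ∀ s ≤ m, ∀ i, ∃ (j : Fin κ) (z : ℤ), w s i = ρ j + z) :
    (m : ℤ) ≤ κ * ⌊∑ i, (w 0 i - w m i)⌋ + (κ - 1) * Fintype.card ι := by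
  classical
  let D (i : ι) := {s ∈ range m | w (s + 1) i < w s i}
  have hcover : range m ⊆ univ.biUnion D := fun s hs => by
    obtain ⟨i, hi⟩ := hdrop s (mem_range.1 hs)
    exact mem_biUnion.2 ⟨i, mem_univ i, mem_filter.2 ⟨hs, hi⟩⟩
  have hfloor : ∑ i, ⌊w 0 i - w m i⌋ ≤ ⌊∑ i, (w 0 i - w m i)⌋ :=
    Int.le_floor.2 (by push_cast; exact sum_le_sum fun i _ => Int.floor_le _)
  calc (m : ℤ) = #(range m) := by rw [card_range]
    _ ≤ ∑ i, (#(D i) : ℤ) := by exact_mod_cast (card_le_card hcover).trans card_biUnion_le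
    _ ≤ ∑ i, (κ * (⌊w 0 i - w m i⌋ + 1) - 1) := sum_le_sum fun i _ => by
        linarith [card_drops_add_one_le ρ (fun s hs => hmono s hs i) (fun s hs => hρ s hs i)]
    _ = κ * ∑ i, ⌊w 0 i - w m i⌋ + (κ - 1) * Fintype.card ι := by
        simp only [mul_add, sum_sub_distrib, sum_add_distrib, mul_sum, sum_const, card_univ,
          nsmul_eq_mul, mul_one]
        ring
    _ ≤ κ * ⌊∑ i, (w 0 i - w m i)⌋ + (κ - 1) * Fintype.card ι := by gcongr

lemma AlternatingMap.map_update_add_of_mem_span {R M P ι : Type*} [Semiring R] [AddCommMonoid M]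
    [Module R M] [AddCommMonoid P] [Module R P] [DecidableEq ι] (f : M [⋀^ι]→ₗ[R] P) (v : ι → M)
    (i : ι) {x : M} (hx : x ∈ Submodule.span R (v '' {j | j ≠ i})) :
    f (update v i (v i + x)) = f v := by
  suffices Submodule.span R (v '' {j | j ≠ i}) ≤ LinearMap.ker (f.toMultilinearMap.toLinearMap v i)
    by rw [f.map_update_add, update_eq_self, show f (update v i x) = 0 from this hx, add_zero]
  rw [Submodule.span_le]
  rintro _ ⟨j, hj, rfl⟩
  exact f.map_update_self v (Ne.symm hj)

lemma top_le_span_range_of_eq_sum {R M ι ι' : Type*} [Semiring R] [AddCommMonoid M] [Module R M]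
    [Fintype ι'] {b : ι → M} {b' : ι' → M} (hb : Submodule.span R (Set.range b) = ⊤)
    (T : ι → ι' → R) (hT : ∀ i, b i = ∑ j, T i j • b' j) : ⊤ ≤ Submodule.span R (Set.range b') := by
  rw [← hb, Submodule.span_le, Set.range_subset_iff]
  intro i
  rw [hT i]
  exact Submodule.sum_smul_mem _ _ fun j _ => Submodule.subset_span (Set.mem_range_self j)

lemma Module.Basis.det_eq_det_of_eq_sum {R M ι : Type*} [CommRing R] [AddCommGroup M] [Module R M]
    [Fintype ι] [DecidableEq ι] (e : Module.Basis ι R M) {v : ι → M} (T : Matrix ι ι R)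
    (hv : ∀ i, v i = ∑ j, T i j • e j) : e.det v = T.det := by
  rw [e.det_apply, ← Matrix.det_transpose]
  congr 1
  ext i j
  rw [Matrix.transpose_apply, e.toMatrix_apply, hv, e.repr_sum_self]

section NormedSpace

variable (k : Type*) [Field k] {E : Type*} [AddCommGroup E] (N : E → WithBot ℝ) {ι : Type*}

section Reduced

variable [Module (RatFunc k) E]

def IsReducedFamily [Fintype ι] (e : ι → E) : Prop :=
  ∀ a : ι → RatFunc k, N (∑ i, a i • e i) = univ.sup fun i => degK (a i) + N (e i)

variable {k N}

lemma IsReducedFamily.degK_repr_add_le [Fintype ι] {e : Module.Basis ι (RatFunc k) E}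
    (he : IsReducedFamily k N e) (x : E) (i : ι) : degK (e.repr x i) + N (e i) ≤ N x := by
  have hx := he (e.repr x)
  rw [e.sum_repr] at hx
  rw [hx]
  exact le_sup (f := fun i => degK (e.repr x i) + N (e i)) (mem_univ i)

/-- Hadamard's inequality `OD(v) ≥ 0`. -/
lemma IsReducedFamily.degK_det_add_le [Fintype ι] [DecidableEq ι]
    {e : Module.Basis ι (RatFunc k) E} (he : IsReducedFamily k N e) (v : ι → E) :
    degK (e.det v) + ∑ i, N (e i) ≤ ∑ i, N (v i) := by
  rw [e.det_apply]
  exact (e.toMatrix v).degK_det_add_le fun i j => by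
    rw [e.toMatrix_apply]
    exact he.degK_repr_add_le (v j) i

lemma IsReducedFamily.intDegree_det_add_sum_le [Fintype ι] [DecidableEq ι]
    {e : Module.Basis ι (RatFunc k) E} (he : IsReducedFamily k N e) {v : ι → E} (hv : e.det v ≠ 0)
    {x y : ι → ℝ} (hx : ∀ i, N (e i) = x i) (hy : ∀ i, N (v i) = y i) :
    ((e.det v).intDegree : ℝ) + ∑ i, x i ≤ ∑ i, y i := by
  have h := he.degK_det_add_le v
  simp only [hx, hy] at h
  rwa [degK_of_ne hv, ← WithBot.coe_sum, ← WithBot.coe_sum, ← WithBot.coe_add,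
    WithBot.coe_le_coe] at h

end Reduced

section ReductionStep

variable [Module (Polynomial k) E]

def IsReductionStep (v v' : ι → E) : Prop :=
  ∃ i₀, (∀ j, j ≠ i₀ → v' j = v j) ∧
    v' i₀ - v i₀ ∈ Submodule.span (Polynomial k) (v '' {j | j ≠ i₀}) ∧ N (v' i₀) < N (v i₀)

variable {k N} {v v' : ι → E}

lemma IsReductionStep.norm_le (h : IsReductionStep k N v v') (j : ι) : N (v' j) ≤ N (v j) := by
  obtain ⟨i₀, hfix, -, hlt⟩ := h
  rcases eq_or_ne j i₀ with rfl | hj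
  · exact hlt.le
  · rw [hfix j hj]

lemma IsReductionStep.exists_norm_lt (h : IsReductionStep k N v v') : ∃ i, N (v' i) < N (v i) :=
  let ⟨i₀, _, _, hlt⟩ := h
  ⟨i₀, hlt⟩

lemma le_mul_floor_sum_of_isReductionStep [Fintype ι] {κ : ℕ} (ρ : Fin κ → ℝ) {m : ℕ}
    {c : ℕ → ι → E} (hc : ∀ s < m, IsReductionStep k N (c s) (c (s + 1))) {w : ℕ → ι → ℝ}
    (hw : ∀ s ≤ m, ∀ i, N (c s i) = w s i)
    (hρ : ∀ s ≤ m, ∀ i, ∃ (j : Fin κ) (z : ℤ), w s i = ρ j + z) :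
    (m : ℤ) ≤ κ * ⌊∑ i, (w 0 i - w m i)⌋ + (κ - 1) * Fintype.card ι := by
  refine le_mul_floor_sum_of_steps ρ w (fun s hs i => ?_) (fun s hs => ?_) hρ
  · have h := (hc s hs).norm_le i
    rwa [hw s hs.le, hw (s + 1) hs, WithBot.coe_le_coe] at h
  · obtain ⟨i, hi⟩ := (hc s hs).exists_norm_lt
    rw [hw s hs.le, hw (s + 1) hs, WithBot.coe_lt_coe] at hi
    exact ⟨i, hi⟩

variable [Module (RatFunc k) E] [IsScalarTower (Polynomial k) (RatFunc k) E] [Fintype ι]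
  [DecidableEq ι]

lemma IsReductionStep.det_eq (h : IsReductionStep k N v v') (e : Module.Basis ι (RatFunc k) E) :
    e.det v' = e.det v := by
  obtain ⟨i₀, hfix, hspan, -⟩ := h
  have hv' : v' = update v i₀ (v i₀ + (v' i₀ - v i₀)) := by
    ext j
    rcases eq_or_ne j i₀ with rfl | hj
    · rw [update_self, add_sub_cancel]
    · rw [update_of_ne hj, hfix j hj]
  rw [hv']
  exact e.det.map_update_add_of_mem_span v i₀
    (Submodule.span_le_restrictScalars (Polynomial k) (RatFunc k) _ hspan)

lemma det_eq_of_isReductionStep {m : ℕ} {c : ℕ → ι → E}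
    (hc : ∀ s < m, IsReductionStep k N (c s) (c (s + 1))) (e : Module.Basis ι (RatFunc k) E)
    {s : ℕ} (hs : s ≤ m) : e.det (c s) = e.det (c 0) := by
  induction s with
  | zero => rfl
  | succ s ih => rw [(hc s hs).det_eq e, ih (by omega)]

lemma isBasis_of_isReductionStep {m : ℕ} {c : ℕ → ι → E}
    (hc : ∀ s < m, IsReductionStep k N (c s) (c (s + 1)))
    (h0 : LinearIndependent (RatFunc k) (c 0) ∧ Submodule.span (RatFunc k) (Set.range (c 0)) = ⊤)
    {s : ℕ} (hs : s ≤ m) :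
    LinearIndependent (RatFunc k) (c s) ∧ Submodule.span (RatFunc k) (Set.range (c s)) = ⊤ := by
  let e := Module.Basis.mk h0.1 h0.2.ge
  rw [e.is_basis_iff_det, det_eq_of_isReductionStep hc e hs]
  exact e.is_basis_iff_det.1 h0

end ReductionStep

end NormedSpace

theorem stmt17_general {k : Type*} [Field k] {E : Type*} [AddCommGroup E]
    [Module (RatFunc k) E] [Module (Polynomial k) E]
    [IsScalarTower (Polynomial k) (RatFunc k) E]
    (N : E → WithBot ℝ)
    (hzero : ∀ x : E, N x = ⊥ ↔ x = 0)
    (n : ℕ) (b b' : Fin n → E)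
    (hbasis : LinearIndependent (RatFunc k) b ∧
      Submodule.span (RatFunc k) (Set.range b) = ⊤)
    (hred' : ∀ a : Fin n → RatFunc k,
      N (∑ i, a i • b' i) = Finset.univ.sup (fun i => degK (a i) + N (b' i)))
    (r' : Fin n → ℝ) (hr' : ∀ i, N (b' i) = ((r' i : ℝ) : WithBot ℝ))
    (r : Fin n → ℝ) (hr : ∀ i, N (b i) = ((r i : ℝ) : WithBot ℝ))
    (T : Matrix (Fin n) (Fin n) (RatFunc k))
    (hT : ∀ i, b i = ∑ j, T i j • b' j)
    (OD : ℝ) (hOD : OD = (∑ i, r i) - (∑ i, r' i) - (T.det.intDegree : ℝ))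
    -- the signature of `E` consists of exactly `κ` classes mod `ℤ`, represented by `ρ`
    (κ : ℕ) (ρ : Fin κ → ℝ)
    (hsig1 : ∀ x : E, x ≠ 0 → ∃ (j : Fin κ) (m : ℤ), N x = ((ρ j + m : ℝ) : WithBot ℝ))
    -- a sequence of `mlen` reduction steps starting from `B`
    (mlen : ℕ) (c : ℕ → Fin n → E) (hc0 : c 0 = b)
    (hstep : ∀ s < mlen, ∃ i₀ : Fin n,
      (∀ j : Fin n, j ≠ i₀ → c (s + 1) j = c s j) ∧
      (c (s + 1) i₀ - c s i₀) ∈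
        Submodule.span (Polynomial k) (c s '' {j : Fin n | j ≠ i₀}) ∧
      N (c (s + 1) i₀) < N (c s i₀)) :
    (mlen : ℤ) ≤ (κ : ℤ) * ⌊OD⌋ + ((κ : ℤ) - 1) * n := by
  have hstep : ∀ s < mlen, IsReductionStep k N (c s) (c (s + 1)) := hstep
  let e := basisOfTopLeSpanOfCardEqFinrank b' (top_le_span_range_of_eq_sum hbasis.2 T hT)
    (Module.finrank_eq_card_basis (.mk hbasis.1 hbasis.2.ge)).symm
  have he : ⇑e = b' := coe_basisOfTopLeSpanOfCardEqFinrank _ _ _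
  have hdet : e.det (c mlen) = T.det := by
    rw [det_eq_of_isReductionStep hstep e le_rfl, hc0, e.det_eq_det_of_eq_sum T (he ▸ hT)]
  have hbasis_c := fun s (hs : s ≤ mlen) => isBasis_of_isReductionStep hstep (hc0 ▸ hbasis) hs
  have hne : ∀ s ≤ mlen, ∀ i, N (c s i) ≠ ⊥ := fun s hs i =>
    mt (hzero _).1 ((hbasis_c s hs).1.ne_zero i)
  set w : ℕ → Fin n → ℝ := fun s i => (N (c s i)).unbotD 0
  have hw : ∀ s ≤ mlen, ∀ i, N (c s i) = w s i := fun s hs i =>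
    (WithBot.unbotD_eq_iff.1 rfl).resolve_right fun h => hne s hs i h.1
  have hcount := le_mul_floor_sum_of_isReductionStep ρ hstep hw fun s hs i => by
    obtain ⟨j, z, hjz⟩ := hsig1 _ (mt (hzero _).2 (hne s hs i))
    exact ⟨j, z, WithBot.coe_injective ((hw s hs i).symm.trans hjz)⟩
  have hhad := (he ▸ hred' : IsReducedFamily k N e).intDegree_det_add_sum_le
    (e.is_basis_iff_det.1 (hbasis_c mlen le_rfl)).ne_zero (x := r') (fun i => by rw [he, hr'])
    (hw mlen le_rfl)
  rw [hdet] at hhad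
  have hw0 : ∀ i, w 0 i = r i := fun i =>
    WithBot.coe_injective ((hw 0 (Nat.zero_le _) i).symm.trans (by rw [hc0, hr i]))
  have hdecrease : ∑ i, (w 0 i - w mlen i) ≤ OD := by
    rw [sum_sub_distrib, hOD]
    simp only [hw0]
    linarith
  rw [Fintype.card_fin] at hcount
  calc (mlen : ℤ) ≤ κ * ⌊∑ i, (w 0 i - w mlen i)⌋ + (κ - 1) * n := hcount
    _ ≤ κ * ⌊OD⌋ + (κ - 1) * n := by gcongr

/-- Let `B` be a basis of an `n`-dimensional normed space `E` over
`K = k(t)` and `κ = #Sig(E)`.  Any sequence of reduction steps (each replacing some `bᵢ`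
by `bᵢ + α` with `α` an `A`-combination of the others and strictly smaller norm) that
transforms `B` into a reduced basis has length at most `κ⌊OD(B)⌋ + (κ-1)n`. -/
theorem stmt17 {k : Type*} [Field k] {E : Type*} [AddCommGroup E]
    [Module (RatFunc k) E] [Module (Polynomial k) E] [Module k E]
    [IsScalarTower (Polynomial k) (RatFunc k) E] [IsScalarTower k (RatFunc k) E]
    (N : E → WithBot ℝ)
    (hadd : ∀ x y : E, N (x + y) ≤ max (N x) (N y))
    (hsmul : ∀ (a : RatFunc k) (x : E), N (a • x) = degK a + N x)
    (hzero : ∀ x : E, N x = ⊥ ↔ x = 0)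
    (hlat : ∃ s : Finset E, Submodule.span (RatFunc k) (s : Set E) = ⊤ ∧
      ∀ r : ℝ, ∃ S : Finset E,
        {x : E | x ∈ Submodule.span (Polynomial k) (s : Set E) ∧ N x ≤ (r : ℝ)} ⊆
          (Submodule.span k (S : Set E) : Set E))
    (n : ℕ) (b b' : Fin n → E)
    (hbasis : LinearIndependent (RatFunc k) b ∧
      Submodule.span (RatFunc k) (Set.range b) = ⊤)
    (hred' : ∀ a : Fin n → RatFunc k,
      N (∑ i, a i • b' i) = Finset.univ.sup (fun i => degK (a i) + N (b' i)))
    (r' : Fin n → ℝ) (hr' : ∀ i, N (b' i) = ((r' i : ℝ) : WithBot ℝ))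
    (horth : ∀ i, -1 < r' i ∧ r' i ≤ 0)
    (r : Fin n → ℝ) (hr : ∀ i, N (b i) = ((r i : ℝ) : WithBot ℝ))
    (T : Matrix (Fin n) (Fin n) (RatFunc k))
    (hT : ∀ i, b i = ∑ j, T i j • b' j)
    (OD : ℝ) (hOD : OD = (∑ i, r i) - (∑ i, r' i) - (T.det.intDegree : ℝ))
    -- the signature of `E` consists of exactly `κ` classes mod `ℤ`, represented by `ρ`
    (κ : ℕ) (ρ : Fin κ → ℝ)
    (hsig1 : ∀ x : E, x ≠ 0 → ∃ (j : Fin κ) (m : ℤ), N x = ((ρ j + m : ℝ) : WithBot ℝ))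
    (hsig2 : ∀ j j' : Fin κ, (∃ m : ℤ, ρ j = ρ j' + m) → j = j')
    -- a sequence of `mlen` reduction steps starting from `B`
    (mlen : ℕ) (c : ℕ → Fin n → E) (hc0 : c 0 = b)
    (hstep : ∀ s < mlen, ∃ i₀ : Fin n,
      (∀ j : Fin n, j ≠ i₀ → c (s + 1) j = c s j) ∧
      (c (s + 1) i₀ - c s i₀) ∈
        Submodule.span (Polynomial k) (c s '' {j : Fin n | j ≠ i₀}) ∧
      N (c (s + 1) i₀) < N (c s i₀))
    -- ending in a reduced basis
    (hredend : ∀ a : Fin n → RatFunc k,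
      N (∑ i, a i • c mlen i) =
        Finset.univ.sup (fun i => degK (a i) + N (c mlen i))) :
    (mlen : ℤ) ≤ (κ : ℤ) * ⌊OD⌋ + ((κ : ℤ) - 1) * n :=
  stmt17_general N hzero n b b' hbasis hred' r' hr' r hr T hT OD hOD κ ρ hsig1 mlen c hc0 hstep
end
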